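/- arXiv:1805.02768 — 3 statements merged into one kernel-verified Lean document; each statement's English description precedes it below -/
import Mathlib

section
/- Let s₁, s₂ : [0,T] → ℝ be nondecreasing continuous functions with s₁(0) = s₂(0) = s₀ and s₁(t) ≤ s₂(t) for all t. Define τ_i(x) = 0 for x ≤ s₀ and τ_i(x) = sup{t ≥ 0 : s_i(t) = x} for s₀ < x < s_i(T). Then ∫_{-∞}^{s₁(T)} |τ₁(x) − τ₂(x)| dx ≤ ∫_0^T |s₁(r) − s₂(r)| dr. -/
open MeasureTheory Real Set

lemma inv_spec (T x : ℝ) (hT : (0:ℝ) ≤ T) (S : ℝ → ℝ) (hm : Monotone S) (hc : Continuous S)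
    (hx1 : S 0 < x) (hx2 : x < S T) :
    sSup {t | t ∈ Set.Icc (0:ℝ) T ∧ S t = x} ∈ {t | t ∈ Set.Icc (0:ℝ) T ∧ S t = x} ∧
    ∀ t ∈ Set.Icc (0:ℝ) T, (S t ≤ x ↔ t ≤ sSup {t | t ∈ Set.Icc (0:ℝ) T ∧ S t = x}) := by
  set E := {t | t ∈ Set.Icc (0:ℝ) T ∧ S t = x} with hE
  have hEeq : E = Set.Icc (0:ℝ) T ∩ S ⁻¹' {x} := by
    ext t; simp [hE, Set.mem_inter_iff]
  have hne : E.Nonempty := by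
    obtain ⟨t, ht, hst⟩ := intermediate_value_Icc hT hc.continuousOn ⟨hx1.le, hx2.le⟩
    exact ⟨t, ht, hst⟩
  have hclosed : IsClosed E := by
    rw [hEeq]; exact isClosed_Icc.inter (isClosed_singleton.preimage hc)
  have hcpt : IsCompact E :=
    (isCompact_Icc (a := (0:ℝ)) (b := T)).of_isClosed_subset hclosed
      (by rw [hEeq]; exact Set.inter_subset_left)
  have hmem : sSup E ∈ E := hcpt.sSup_mem hne
  refine ⟨hmem, fun t ht => ⟨fun hle => ?_, fun hle => ?_⟩⟩
  · rcases eq_or_lt_of_le hle with heq | hlt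
    · exact le_csSup hcpt.bddAbove ⟨ht, heq⟩
    · obtain ⟨t', ht', hst'⟩ := intermediate_value_Icc ht.2 hc.continuousOn ⟨hlt.le, hx2.le⟩
      exact le_trans ht'.1 (le_csSup hcpt.bddAbove ⟨⟨le_trans ht.1 ht'.1, ht'.2⟩, hst'⟩)
  · calc S t ≤ S (sSup E) := hm hle
      _ = x := hmem.2

theorem stmt_5 (T s0 : ℝ) (hT : 0 < T) (s₁ s₂ τ₁ τ₂ : ℝ → ℝ)
    (hs₁m : MonotoneOn s₁ (Set.Icc 0 T)) (hs₂m : MonotoneOn s₂ (Set.Icc 0 T))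
    (hs₁c : ContinuousOn s₁ (Set.Icc 0 T)) (hs₂c : ContinuousOn s₂ (Set.Icc 0 T))
    (h0₁ : s₁ 0 = s0) (h0₂ : s₂ 0 = s0)
    (hle : ∀ t ∈ Set.Icc (0:ℝ) T, s₁ t ≤ s₂ t)
    (hτ₁0 : ∀ x, x ≤ s0 → τ₁ x = 0) (hτ₂0 : ∀ x, x ≤ s0 → τ₂ x = 0)
    (hτ₁ : ∀ x ∈ Set.Ioo s0 (s₁ T), τ₁ x = sSup {t | t ∈ Set.Icc (0:ℝ) T ∧ s₁ t = x})
    (hτ₂ : ∀ x ∈ Set.Ioo s0 (s₂ T), τ₂ x = sSup {t | t ∈ Set.Icc (0:ℝ) T ∧ s₂ t = x})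
    (hτ₁b : ∀ x, 0 ≤ τ₁ x ∧ τ₁ x ≤ T) (hτ₂b : ∀ x, 0 ≤ τ₂ x ∧ τ₂ x ≤ T)
    (hτ₁m : Monotone τ₁) (hτ₂m : Monotone τ₂) :
    (∫ x in Set.Iic (s₁ T), |τ₁ x - τ₂ x|) ≤ ∫ r in (0:ℝ)..T, |s₁ r - s₂ r| := by
  have hT' : (0:ℝ) ≤ T := hT.le
  have h0T : (0:ℝ) ∈ Set.Icc (0:ℝ) T := ⟨le_refl 0, hT'⟩
  have hTT : T ∈ Set.Icc (0:ℝ) T := ⟨hT', le_refl T⟩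
  -- extended functions
  set q : ℝ → ℝ := fun t => max 0 (min t T) with hqdef
  have hq_mem : ∀ t, q t ∈ Set.Icc (0:ℝ) T := fun t =>
    ⟨le_max_left _ _, max_le hT' (min_le_right _ _)⟩
  have hq_id : ∀ t ∈ Set.Icc (0:ℝ) T, q t = t := fun t ht => by
    simp only [hqdef]; rw [min_eq_left ht.2, max_eq_right ht.1]
  have hq_cont : Continuous q := continuous_const.max (continuous_id.min continuous_const)
  have hq_mono : Monotone q := fun a b h => max_le_max le_rfl (min_le_min h le_rfl)
  set S₁ : ℝ → ℝ := fun t => s₁ (q t) with hS₁def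
  set S₂ : ℝ → ℝ := fun t => s₂ (q t) with hS₂def
  have hS₁c : Continuous S₁ := hs₁c.comp_continuous hq_cont hq_mem
  have hS₂c : Continuous S₂ := hs₂c.comp_continuous hq_cont hq_mem
  have hS₁m : Monotone S₁ := fun a b h => hs₁m (hq_mem a) (hq_mem b) (hq_mono h)
  have hS₂m : Monotone S₂ := fun a b h => hs₂m (hq_mem a) (hq_mem b) (hq_mono h)
  have hS₁eq : ∀ t ∈ Set.Icc (0:ℝ) T, S₁ t = s₁ t := fun t ht => congrArg s₁ (hq_id t ht)
  have hS₂eq : ∀ t ∈ Set.Icc (0:ℝ) T, S₂ t = s₂ t := fun t ht => congrArg s₂ (hq_id t ht)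
  have hSle : ∀ t, S₁ t ≤ S₂ t := fun t => hle (q t) (hq_mem t)
  have hS₁0 : S₁ 0 = s0 := by rw [hS₁eq 0 h0T, h0₁]
  have hS₂0 : S₂ 0 = s0 := by rw [hS₂eq 0 h0T, h0₂]
  have hS₁T : S₁ T = s₁ T := hS₁eq T hTT
  have hS₂T : S₂ T = s₂ T := hS₂eq T hTT
  have hs12T : s₁ T ≤ s₂ T := hle T hTT
  have hset₁ : ∀ x : ℝ, {t | t ∈ Set.Icc (0:ℝ) T ∧ s₁ t = x}
      = {t | t ∈ Set.Icc (0:ℝ) T ∧ S₁ t = x} := by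
    intro x; ext t; simp only [Set.mem_setOf_eq]
    exact and_congr_right fun ht => by rw [hS₁eq t ht]
  have hset₂ : ∀ x : ℝ, {t | t ∈ Set.Icc (0:ℝ) T ∧ s₂ t = x}
      = {t | t ∈ Set.Icc (0:ℝ) T ∧ S₂ t = x} := by
    intro x; ext t; simp only [Set.mem_setOf_eq]
    exact and_congr_right fun ht => by rw [hS₂eq t ht]
  -- key facts
  have key₁ : ∀ x ∈ Set.Ioo s0 (s₁ T),
      (τ₁ x ∈ Set.Icc (0:ℝ) T ∧ S₁ (τ₁ x) = x) ∧
      ∀ t ∈ Set.Icc (0:ℝ) T, (S₁ t ≤ x ↔ t ≤ τ₁ x) := by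
    intro x hx
    have h := inv_spec T x hT' S₁ hS₁m hS₁c (by rw [hS₁0]; exact hx.1)
      (by rw [hS₁T]; exact hx.2)
    rw [hτ₁ x hx, hset₁ x]
    exact ⟨⟨h.1.1, h.1.2⟩, h.2⟩
  have key₂ : ∀ x ∈ Set.Ioo s0 (s₁ T),
      (τ₂ x ∈ Set.Icc (0:ℝ) T ∧ S₂ (τ₂ x) = x) ∧
      ∀ t ∈ Set.Icc (0:ℝ) T, (S₂ t ≤ x ↔ t ≤ τ₂ x) := by
    intro x hx
    have hx' : x ∈ Set.Ioo s0 (s₂ T) := ⟨hx.1, lt_of_lt_of_le hx.2 hs12T⟩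
    have h := inv_spec T x hT' S₂ hS₂m hS₂c (by rw [hS₂0]; exact hx.1)
      (by rw [hS₂T]; exact hx'.2)
    rw [hτ₂ x hx', hset₂ x]
    exact ⟨⟨h.1.1, h.1.2⟩, h.2⟩
  have hττ : ∀ x ∈ Set.Ioo s0 (s₁ T), τ₂ x ≤ τ₁ x := by
    intro x hx
    have k₁ := key₁ x hx; have k₂ := key₂ x hx
    have h1 : S₁ (τ₂ x) ≤ x := le_trans (hSle _) (le_of_eq k₂.1.2)
    exact (k₁.2 (τ₂ x) k₂.1.1).mp h1
  -- the two regions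
  set A : Set ℝ := Set.Ioo s0 (s₁ T) with hAdef
  have hAmeas : MeasurableSet A := measurableSet_Ioo
  set R₂ : Set (ℝ × ℝ) := regionBetween S₁ S₂ (Set.Icc (0:ℝ) T) with hR₂def
  set G : Set (ℝ × ℝ) := {p : ℝ × ℝ | p.2 = S₁ p.1} with hGdef
  have hGm : MeasurableSet G :=
    (isClosed_eq continuous_snd (hS₁c.comp continuous_fst)).measurableSet
  have hR₂m : MeasurableSet R₂ :=
    measurableSet_regionBetween hS₁c.measurable hS₂c.measurable measurableSet_Icc
  -- integrability of τ's on A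
  have hint : ∀ (τ : ℝ → ℝ), Monotone τ → (∀ x, 0 ≤ τ x ∧ τ x ≤ T) →
      IntegrableOn τ A := by
    intro τ hτmono hb
    refine Measure.integrableOn_of_bounded (M := T) measure_Ioo_lt_top.ne
      hτmono.measurable.aestronglyMeasurable ?_
    filter_upwards with x
    rw [Real.norm_eq_abs, abs_le]
    exact ⟨le_trans (neg_nonpos.mpr hT') (hb x).1, (hb x).2⟩
  have hR₁vol : volume.prod volume (regionBetween τ₂ τ₁ A)
      = ENNReal.ofReal (∫ x in A, (τ₁ - τ₂) x) :=
    volume_regionBetween_eq_integral (hint τ₂ hτ₂m hτ₂b) (hint τ₁ hτ₁m hτ₁b) hAmeas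
      (fun x hx => hττ x hx)
  have hR₂vol : volume.prod volume R₂
      = ENNReal.ofReal (∫ t in Set.Icc (0:ℝ) T, (S₂ - S₁) t) :=
    volume_regionBetween_eq_integral (hS₁c.integrableOn_Icc) (hS₂c.integrableOn_Icc)
      measurableSet_Icc (fun t _ => hSle t)
  -- graph is null
  have hG0 : volume.prod volume G = 0 := by
    rw [Measure.prod_apply hGm]
    have hsec : ∀ t : ℝ, (Prod.mk t ⁻¹' G) = {S₁ t} := by
      intro t; ext y
      simp [hGdef, Set.mem_preimage]
    simp only [hsec, measure_singleton, lintegral_const, zero_mul]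
  -- inclusion
  have hsub : regionBetween τ₂ τ₁ A ⊆ Prod.swap ⁻¹' (R₂ ∪ G) := by
    rintro ⟨x, t⟩ ⟨hxA, ht⟩
    have k₁ := key₁ x hxA; have k₂ := key₂ x hxA
    have htI : t ∈ Set.Icc (0:ℝ) T :=
      ⟨le_trans k₂.1.1.1 ht.1.le, le_trans ht.2.le k₁.1.1.2⟩
    have hS₁tx : S₁ t ≤ x := (k₁.2 t htI).mpr ht.2.le
    rcases eq_or_lt_of_le hS₁tx with heq | hlt
    · exact Or.inr heq.symm
    · refine Or.inl ⟨htI, hlt, ?_⟩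
      by_contra hcon
      push_neg at hcon
      exact absurd ((k₂.2 t htI).mp hcon) (not_le.mpr ht.1)
  have hvol : volume.prod volume (regionBetween τ₂ τ₁ A) ≤ volume.prod volume R₂ := by
    calc volume.prod volume (regionBetween τ₂ τ₁ A)
        ≤ volume.prod volume (Prod.swap ⁻¹' (R₂ ∪ G)) := measure_mono hsub
      _ = volume.prod volume (R₂ ∪ G) :=
          Measure.measurePreserving_swap.measure_preimage (hR₂m.union hGm).nullMeasurableSet
      _ ≤ volume.prod volume R₂ + volume.prod volume G := measure_union_le _ _
      _ = volume.prod volume R₂ := by rw [hG0, add_zero]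
  -- rewrite LHS
  have hs0T : s0 ≤ s₁ T := by rw [← h0₁]; exact hs₁m h0T hTT hT'
  have hf0 : Set.EqOn (fun x => |τ₁ x - τ₂ x|) 0 (Set.Iic s0) := by
    intro x hx
    simp [hτ₁0 x hx, hτ₂0 x hx]
  have hint0 : IntegrableOn (fun x => |τ₁ x - τ₂ x|) (Set.Iic s0) :=
    (integrableOn_zero).congr_fun (fun x hx => (hf0 hx).symm) measurableSet_Iic
  have hintIoc : IntegrableOn (fun x => |τ₁ x - τ₂ x|) (Set.Ioc s0 (s₁ T)) := by
    refine Measure.integrableOn_of_bounded (M := T) measure_Ioc_lt_top.ne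
      ((hτ₁m.measurable.sub hτ₂m.measurable).abs).aestronglyMeasurable ?_
    filter_upwards with x
    rw [Real.norm_eq_abs, abs_abs, abs_le]
    constructor
    · have := (hτ₁b x).1; have := (hτ₂b x).2; linarith
    · have := (hτ₁b x).2; have := (hτ₂b x).1; linarith
  have hLHS : (∫ x in Set.Iic (s₁ T), |τ₁ x - τ₂ x|) = ∫ x in A, (τ₁ - τ₂) x := by
    have h1 : (∫ x in Set.Iic s0, |τ₁ x - τ₂ x|) = 0 := by
      rw [setIntegral_congr_fun measurableSet_Iic hf0]
      simp
    rw [← Set.Iic_union_Ioc_eq_Iic hs0T,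
      setIntegral_union ((Set.Iic_disjoint_Ioi le_rfl).mono_right Set.Ioc_subset_Ioi_self)
        measurableSet_Ioc hint0 hintIoc, h1, zero_add, integral_Ioc_eq_integral_Ioo]
    refine setIntegral_congr_fun measurableSet_Ioo fun x hx => ?_
    simp only [Pi.sub_apply]
    exact abs_of_nonneg (sub_nonneg.2 (hττ x hx))
  -- rewrite RHS
  have hRHS : (∫ r in (0:ℝ)..T, |s₁ r - s₂ r|) = ∫ t in Set.Icc (0:ℝ) T, (S₂ - S₁) t := by
    rw [intervalIntegral.integral_of_le hT', integral_Icc_eq_integral_Ioc]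
    refine setIntegral_congr_fun measurableSet_Ioc fun t ht => ?_
    have htI : t ∈ Set.Icc (0:ℝ) T := ⟨ht.1.le, ht.2⟩
    simp only [Pi.sub_apply]
    rw [abs_sub_comm, abs_of_nonneg (sub_nonneg.2 (hle t htI)), hS₁eq t htI, hS₂eq t htI]
  rw [hLHS, hRHS]
  rw [hR₁vol, hR₂vol] at hvol
  have hnn : 0 ≤ ∫ t in Set.Icc (0:ℝ) T, (S₂ - S₁) t :=
    setIntegral_nonneg measurableSet_Icc fun t _ => sub_nonneg.2 (hSle t)
  exact (ENNReal.ofReal_le_ofReal_iff hnn).mp hvol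
end

section
/- (From weighted-mass convergence to free-boundary asymptotics) Suppose s : (0,∞) → ℝ with s(t) → ∞, M_ψ : (0,∞) → ℝ, constants C₁, A, L, d, t₀ > 0, and: (i) M_ψ(t) ≥ C₁A(t−t₀) + ½(s(t₀)+d+L)² − ½(s(t)+d+L)² + M_ψ(t₀) for t ≥ t₀; (ii) M_ψ(t) ≤ C₁At − ½(s(t)−L)² + ½L². If F(t) := M_ψ(t)/t → F_∞ as t → ∞, then s(t)/√t → (2C₁A − 2F_∞)^{1/2}. -/
/-!
By (ii), `((s t - L) / √t)² ≤ 2C₁A - 2F(t) + L²/t`, and by (i),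
`((s t + d + L) / √t)² ≥ 2C₁A - 2F(t) + K/t` for a constant `K` depending only on the data at `t₀`.
Both right-hand sides tend to `2C₁A - 2F_∞`; taking square roots (legitimate once `s t` is large)
squeezes `s t / √t`, since the shifts `L / √t` and `(d + L) / √t` vanish.
-/

open MeasureTheory Real Set

open Filter Topology

lemma tendsto_const_div_sqrt_atTop (p : ℝ) : Tendsto (fun t => p / √t) atTop (𝓝 0) :=
  tendsto_const_nhds.div_atTop <| tendsto_sqrt_atTop

lemma sqrt_le_div_sqrt_of_mul_le {t y a : ℝ} (ht : 0 < t) (hy : 0 ≤ y) (h : t * a ≤ y ^ 2) :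
    √a ≤ y / √t := by
  refine Real.sqrt_le_iff.mpr ⟨div_nonneg hy (sqrt_nonneg t), ?_⟩
  rw [div_pow, sq_sqrt ht.le, le_div_iff₀ ht]
  linarith

lemma div_sqrt_le_sqrt_of_le_mul {t y b : ℝ} (ht : 0 < t) (h : y ^ 2 ≤ t * b) :
    y / √t ≤ √b := by
  refine Real.le_sqrt_of_sq_le ?_
  rw [div_pow, sq_sqrt ht.le, div_le_iff₀ ht]
  linarith

theorem tendsto_div_sqrt_of_sq_squeeze {x lo hi : ℝ → ℝ} {c p q : ℝ}
    (hx : Tendsto x atTop atTop) (hlo : Tendsto lo atTop (𝓝 c)) (hhi : Tendsto hi atTop (𝓝 c))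
    (h_lo : ∀ᶠ t in atTop, t * lo t ≤ (x t + p) ^ 2)
    (h_hi : ∀ᶠ t in atTop, (x t - q) ^ 2 ≤ t * hi t) :
    Tendsto (fun t => x t / √t) atTop (𝓝 √c) := by
  have h_lower : Tendsto (fun t => √(lo t) - p / √t) atTop (𝓝 √c) := by
    simpa using (continuous_sqrt.tendsto c).comp hlo |>.sub (tendsto_const_div_sqrt_atTop p)
  have h_upper : Tendsto (fun t => √(hi t) + q / √t) atTop (𝓝 √c) := by
    simpa using (continuous_sqrt.tendsto c).comp hhi |>.add (tendsto_const_div_sqrt_atTop q)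
  refine tendsto_of_tendsto_of_tendsto_of_le_of_le' h_lower h_upper ?_ ?_
  · filter_upwards [h_lo, eventually_gt_atTop 0, hx.eventually_ge_atTop (-p)] with t h ht hxt
    have := sqrt_le_div_sqrt_of_mul_le ht (by linarith) h
    rw [add_div] at this
    linarith
  · filter_upwards [h_hi, eventually_gt_atTop 0] with t h ht
    have := div_sqrt_le_sqrt_of_le_mul ht h
    rw [sub_div] at this
    linarith

theorem stmt_16_general (s Mψ : ℝ → ℝ) (C1 A L d t0 Finf : ℝ)
    (hs : Filter.Tendsto s Filter.atTop Filter.atTop)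
    (h1 : ∀ t, t0 ≤ t →
      C1 * A * (t - t0) + (s t0 + d + L) ^ 2 / 2 - (s t + d + L) ^ 2 / 2 + Mψ t0
        ≤ Mψ t)
    (h2 : ∀ t, 0 < t → Mψ t ≤ C1 * A * t - (s t - L) ^ 2 / 2 + L ^ 2 / 2)
    (hF : Filter.Tendsto (fun t => Mψ t / t) Filter.atTop (nhds Finf)) :
    Filter.Tendsto (fun t => s t / Real.sqrt t) Filter.atTop
      (nhds (Real.sqrt (2 * C1 * A - 2 * Finf))) := by
  set K := 2 * Mψ t0 - 2 * C1 * A * t0 + (s t0 + d + L) ^ 2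
  have h_lim (r : ℝ) : Tendsto (fun t => 2 * C1 * A - 2 * (Mψ t / t) + r / t) atTop
      (𝓝 (2 * C1 * A - 2 * Finf)) := by
    simpa using ((hF.const_mul 2).const_sub _).add (tendsto_const_nhds.div_atTop tendsto_id)
  have h_mul (r : ℝ) : ∀ᶠ t in atTop,
      t * (2 * C1 * A - 2 * (Mψ t / t) + r / t) = 2 * C1 * A * t - 2 * Mψ t + r := by
    filter_upwards [eventually_ne_atTop 0] with t ht
    field_simp
  refine tendsto_div_sqrt_of_sq_squeeze (p := d + L) (q := L) hs (h_lim K) (h_lim (L ^ 2)) ?_ ?_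
  · filter_upwards [h_mul K, eventually_ge_atTop t0] with t h ht
    rw [h, ← add_assoc]
    linarith [h1 t ht]
  · filter_upwards [h_mul (L ^ 2), eventually_gt_atTop 0] with t h ht
    rw [h]
    linarith [h2 t ht]

theorem stmt_16 (s Mψ : ℝ → ℝ) (C1 A L d t0 Finf : ℝ)
    (hC1 : 0 < C1) (hA : 0 < A) (hL : 0 ≤ L) (hd : 0 ≤ d) (ht0 : 0 < t0)
    (hs : Filter.Tendsto s Filter.atTop Filter.atTop)
    (h1 : ∀ t, t0 ≤ t →
      C1 * A * (t - t0) + (s t0 + d + L) ^ 2 / 2 - (s t + d + L) ^ 2 / 2 + Mψ t0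
        ≤ Mψ t)
    (h2 : ∀ t, 0 < t → Mψ t ≤ C1 * A * t - (s t - L) ^ 2 / 2 + L ^ 2 / 2)
    (hF : Filter.Tendsto (fun t => Mψ t / t) Filter.atTop (nhds Finf))
    (hnn : 0 ≤ 2 * C1 * A - 2 * Finf) :
    Filter.Tendsto (fun t => s t / Real.sqrt t) Filter.atTop
      (nhds (Real.sqrt (2 * C1 * A - 2 * Finf))) :=
  stmt_16_general s Mψ C1 A L d t0 Finf hs h1 h2 hF
end

section
/- (Mass–volume balance in the radial case) Let (u,R) solve the radial nonlocal Stefan problem in ℝ^N: ∂_t u = J∗u − u in {|x| < R(t)}, u = 0 outside, and d/dt(R^N(t)) = N ∫_{R(t)}^∞ r^{N−1} (A_J u)(r,t) dr. Then d/dt |B(0,R(t))| = − d/dt ∫_{ℝ^N} u(·,t), and consequently R(t) ≤ (M(0)/ω_N + R(0)^N)^{1/N} for all t, where ω_N = |B(0,1)| and M(0) = ∫ u(·,0). -/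
/-!
Writing `A_J u = J ∗ u`, the convolution has the same mass as `u` because `∫ J = 1`. Since `u`
vanishes outside `B(0, R(t))`, the mass flux `M'(t) = ∫_B (J ∗ u - u)` therefore equals minus the
mass of `J ∗ u` outside the ball (the sphere being null), which is exactly the growth of
`ω_N R(t)^N` in the Stefan condition. Hence `ω_N R(t)^N + M(t)` is constant, and `M(t) ≥ 0` gives
the bound on `R(t)`.
-/

open MeasureTheory Real Set Metric

section KernelMass

variable {G : Type*} [AddGroup G] [MeasurableSpace G] [MeasurableAdd₂ G] [MeasurableNeg G]
  {μ : Measure G} [SFinite μ] [μ.IsAddRightInvariant] {J f : G → ℝ}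

theorem MeasureTheory.Integrable.integrable_integral_sub_mul (hJ : Integrable J μ)
    (hf : Integrable f μ) :
    Integrable (fun x => ∫ y, J (x - y) * f y ∂μ) μ :=
  hf.integrable_convolution (ContinuousLinearMap.mul ℝ ℝ).flip hJ

theorem integral_integral_sub_mul (hJ : Integrable J μ) (hf : Integrable f μ) :
    ∫ x, ∫ y, J (x - y) * f y ∂μ ∂μ = (∫ x, J x ∂μ) * ∫ x, f x ∂μ :=
  integral_convolution (ContinuousLinearMap.mul ℝ ℝ).flip hf hJ

end KernelMass

theorem MeasureTheory.Measure.closedBall_ae_eq_ball {E : Type*} [NormedAddCommGroup E]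
    [NormedSpace ℝ E] [FiniteDimensional ℝ E] [Nontrivial E] [MeasurableSpace E] [BorelSpace E]
    (μ : Measure E) [μ.IsAddHaarMeasure] (x : E) (r : ℝ) : closedBall x r =ᵐ[μ] ball x r :=
  ae_eq_set.2 ⟨by rw [closedBall_sdiff_ball]; exact Measure.addHaar_sphere μ x r,
    by rw [sdiff_eq_empty.2 ball_subset_closedBall, measure_empty]⟩

theorem setIntegral_ball_sub_eq_neg_setIntegral_lt_norm {E : Type*} [NormedAddCommGroup E]
    [NormedSpace ℝ E] [FiniteDimensional ℝ E] [Nontrivial E] [MeasurableSpace E] [BorelSpace E]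
    (μ : Measure E) [μ.IsAddHaarMeasure] {f g : E → ℝ} {r : ℝ} (hf : Integrable f μ)
    (hg : Integrable g μ) (hf_supp : ∀ x, r ≤ ‖x‖ → f x = 0)
    (hmass : ∫ x, g x ∂μ = ∫ x, f x ∂μ) :
    ∫ x in ball 0 r, (g x - f x) ∂μ = -∫ x in {x | r < ‖x‖}, g x ∂μ := by
  have hf_ball : ∫ x in ball 0 r, f x ∂μ = ∫ x, f x ∂μ :=
    setIntegral_eq_integral_of_forall_compl_eq_zero fun x hx =>
      hf_supp x (by simpa using hx)
  have hg_split : ∫ x in ball 0 r, g x ∂μ + ∫ x in {x | r < ‖x‖}, g x ∂μ = ∫ x, g x ∂μ := by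
    have hcompl : {x : E | r < ‖x‖} = (closedBall 0 r)ᶜ := by ext; simp
    rw [hcompl, ← setIntegral_congr_set (Measure.closedBall_ae_eq_ball μ 0 r),
      integral_add_compl isClosed_closedBall.measurableSet hg]
  rw [integral_sub hg.integrableOn hf.integrableOn, hf_ball]
  linarith

theorem eq_of_hasDerivAt_eq_zero_of_continuousOn_Ici {F : ℝ → ℝ} {a : ℝ}
    (hc : ContinuousOn F (Ici a)) (hd : ∀ t, a < t → HasDerivAt F 0 t) {t : ℝ} (ht : a ≤ t) :
    F t = F a := by
  rcases ht.eq_or_lt with rfl | hat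
  · rfl
  obtain ⟨c, -, hslope⟩ := exists_hasDerivAt_eq_slope F (fun _ => 0) hat
    (hc.mono Icc_subset_Ici_self) fun s hs => hd s hs.1
  rw [eq_comm, div_eq_zero_iff, sub_eq_zero] at hslope
  exact hslope.resolve_right (sub_ne_zero.2 hat.ne')

theorem stmt_17_general (N : ℕ) (hN : 0 < N) (ωN : ℝ)
    (J : EuclideanSpace ℝ (Fin N) → ℝ) (u : EuclideanSpace ℝ (Fin N) → ℝ → ℝ)
    (R M M' : ℝ → ℝ)
    (hω : ωN = (volume (Metric.ball (0 : EuclideanSpace ℝ (Fin N)) 1)).toReal)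
    (hJ1 : (∫ x, J x) = 1)
    (hunn : ∀ x t, 0 ≤ u x t) (huint : ∀ t, Integrable fun x => u x t)
    (husupp : ∀ x t, 0 ≤ t → R t ≤ ‖x‖ → u x t = 0)
    (hRm : Monotone R) (hR0 : 0 < R 0) (hRc : ContinuousOn R (Set.Ici 0))
    (hM : ∀ t, M t = ∫ x, u x t)
    (hMc : ContinuousOn M (Set.Ici 0))
    (hMd : ∀ t, 0 < t → HasDerivAt M (M' t) t)
    (hMunder : ∀ t, 0 < t →
      M' t = ∫ x in Metric.ball (0 : EuclideanSpace ℝ (Fin N)) (R t),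
        ((∫ y, J (x - y) * u y t) - u x t))
    (hstefan : ∀ t, 0 < t →
      HasDerivAt (fun t => ωN * R t ^ N)
        (∫ x in {x : EuclideanSpace ℝ (Fin N) | R t < ‖x‖},
          ∫ y, J (x - y) * u y t) t) :
    (∀ t, 0 < t → HasDerivAt (fun t => ωN * R t ^ N) (-(M' t)) t) ∧
      (∀ t, 0 ≤ t → R t ≤ (M 0 / ωN + R 0 ^ N) ^ ((1 : ℝ) / N)) := by
  have : Nonempty (Fin N) := ⟨⟨0, hN⟩⟩
  have hJ : Integrable J := Integrable.of_integral_ne_zero (by rw [hJ1]; exact one_ne_zero)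
  have volume_rate : ∀ t, 0 < t → HasDerivAt (fun t => ωN * R t ^ N) (-(M' t)) t := by
    intro t ht
    have hmass : ∫ x, ∫ y, J (x - y) * u y t = ∫ x, u x t := by
      rw [integral_integral_sub_mul hJ (huint t), hJ1, one_mul]
    rw [hMunder t ht, setIntegral_ball_sub_eq_neg_setIntegral_lt_norm volume (huint t)
      (hJ.integrable_integral_sub_mul (huint t)) (fun x => husupp x t ht.le) hmass, neg_neg]
    exact hstefan t ht
  refine ⟨volume_rate, fun t ht => ?_⟩
  have hconst : ωN * R t ^ N + M t = ωN * R 0 ^ N + M 0 :=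
    eq_of_hasDerivAt_eq_zero_of_continuousOn_Ici ((continuousOn_const.mul (hRc.pow N)).add hMc)
      (fun s hs => neg_add_cancel (M' s) ▸ (volume_rate s hs).add (hMd s hs)) ht
  have hω_pos : 0 < ωN := hω ▸ ENNReal.toReal_pos (measure_ball_pos volume _ one_pos).ne'
    measure_ball_lt_top.ne
  have hMt : 0 ≤ M t := hM t ▸ integral_nonneg fun x => hunn x t
  have hRt : 0 ≤ R t := hR0.le.trans (hRm ht)
  have hpow : R t ^ N ≤ M 0 / ωN + R 0 ^ N := by
    rw [div_add' _ _ _ hω_pos.ne', le_div_iff₀ hω_pos]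
    linarith
  calc R t = (R t ^ N) ^ ((1 : ℝ) / N) := by
        rw [one_div, pow_rpow_inv_natCast hRt hN.ne']
    _ ≤ (M 0 / ωN + R 0 ^ N) ^ ((1 : ℝ) / N) := by gcongr

theorem stmt_17 (N : ℕ) (hN : 0 < N) (ωN : ℝ)
    (J : EuclideanSpace ℝ (Fin N) → ℝ) (u : EuclideanSpace ℝ (Fin N) → ℝ → ℝ)
    (R M M' : ℝ → ℝ)
    (hω : ωN = (volume (Metric.ball (0 : EuclideanSpace ℝ (Fin N)) 1)).toReal)
    (hJc : Continuous J) (hJnn : ∀ x, 0 ≤ J x)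
    (hJrad : ∀ x y, ‖x‖ = ‖y‖ → J x = J y) (hJ1 : (∫ x, J x) = 1)
    (hunn : ∀ x t, 0 ≤ u x t) (huint : ∀ t, Integrable fun x => u x t)
    (husupp : ∀ x t, 0 ≤ t → R t ≤ ‖x‖ → u x t = 0)
    (hRm : Monotone R) (hR0 : 0 < R 0) (hRc : ContinuousOn R (Set.Ici 0))
    (hM : ∀ t, M t = ∫ x, u x t)
    (hMc : ContinuousOn M (Set.Ici 0))
    (hMd : ∀ t, 0 < t → HasDerivAt M (M' t) t)
    (hMunder : ∀ t, 0 < t →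
      M' t = ∫ x in Metric.ball (0 : EuclideanSpace ℝ (Fin N)) (R t),
        ((∫ y, J (x - y) * u y t) - u x t))
    (hstefan : ∀ t, 0 < t →
      HasDerivAt (fun t => ωN * R t ^ N)
        (∫ x in {x : EuclideanSpace ℝ (Fin N) | R t < ‖x‖},
          ∫ y, J (x - y) * u y t) t) :
    (∀ t, 0 < t → HasDerivAt (fun t => ωN * R t ^ N) (-(M' t)) t) ∧
      (∀ t, 0 ≤ t → R t ≤ (M 0 / ωN + R 0 ^ N) ^ ((1 : ℝ) / N)) :=
  stmt_17_general N hN ωN J u R M M' hω hJ1 hunn huint husupp hRm hR0 hRc hM hMc hMd hMunder hstefan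
end
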